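/- arXiv:2108.11820 — 2 statements merged into one kernel-verified Lean document; each statement's English description precedes it below -/
import Mathlib

section
/- For positive reals η₁,…,η_n and m₁,…,m_n, if P = ∏_{j=1}^n Poisson(λ m_j){λ η_j} (each λη_j ∈ ℕ), then (1/λ) log P → -∑_{j=1}^n (η_j log(η_j/m_j) - η_j + m_j) as λ → ∞, i.e. the normalized log-probability of a multivariate Poisson type converges to the negative relative entropy H(η‖m) = ∑_j [η_j log(η_j/m_j) - η_j + m_j]. -/
open Real Filter Finset

lemma poisson_single_tendsto (η m : ℝ) (hη : 0 < η) (hm : 0 < m)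
    (k : ℕ → ℕ) (hk : ∀ l, (k l : ℝ) = l * η) :
    Tendsto (fun l : ℕ => (1 / (l : ℝ)) *
        Real.log (Real.exp (-(l : ℝ) * m) * ((l : ℝ) * m) ^ (k l) / Nat.factorial (k l)))
      atTop (nhds (-(η * Real.log (η / m) - η + m))) := by
  set C : ℝ := -(η * Real.log (η / m) - η + m) with hC
  have kTop : Tendsto k atTop atTop := by
    rw [← tendsto_natCast_atTop_iff (R := ℝ)]
    simp only [hk]
    exact (tendsto_natCast_atTop_atTop (R := ℝ)).atTop_mul_const hη
  have h1 : Tendsto (fun l : ℕ => (1/(l:ℝ)) * Real.log (Stirling.stirlingSeq (k l)))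
      atTop (nhds 0) := by
    have := tendsto_one_div_atTop_nhds_zero_nat.mul
      (((Real.continuousAt_log (by positivity : Real.sqrt π ≠ 0)).tendsto).comp
        (Stirling.tendsto_stirlingSeq_sqrt_pi.comp kTop))
    simpa using this
  have hloglin : Tendsto (fun l : ℕ => Real.log l / (l:ℝ)) atTop (nhds 0) :=
    (Real.isLittleO_log_id_atTop.tendsto_div_nhds_zero).comp tendsto_natCast_atTop_atTop
  have h2 : Tendsto (fun l : ℕ => (1/(l:ℝ)) * (1/2 * Real.log (2 * ((l:ℝ) * η))))
      atTop (nhds 0) := by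
    have key : ∀ᶠ l : ℕ in atTop,
        (1/(l:ℝ)) * (1/2 * Real.log (2 * ((l:ℝ) * η)))
          = 1/2 * ((Real.log 2 + Real.log η) * (1/(l:ℝ)) + Real.log l / l) := by
      filter_upwards [eventually_ge_atTop 1] with l hl
      have hl0 : (0:ℝ) < l := by exact_mod_cast hl
      rw [Real.log_mul (by norm_num) (by positivity), Real.log_mul (ne_of_gt hl0) (ne_of_gt hη)]
      field_simp
      ring
    have := (tendsto_const_nhds (x := Real.log 2 + Real.log η)).mul
      tendsto_one_div_atTop_nhds_zero_nat |>.add hloglin |>.const_mul (1/2 : ℝ)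
    refine Tendsto.congr' (Filter.EventuallyEq.symm (f := fun l : ℕ => (1/(l:ℝ)) * (1/2 * Real.log (2 * ((l:ℝ) * η)))) key) ?_
    simpa using this
  have hg : Tendsto (fun l : ℕ => C - (1/(l:ℝ)) * Real.log (Stirling.stirlingSeq (k l))
      - (1/(l:ℝ)) * (1/2 * Real.log (2 * ((l:ℝ) * η)))) atTop (nhds C) := by
    have := (tendsto_const_nhds (x := C)).sub h1 |>.sub h2
    simpa using this
  refine Tendsto.congr' ?_ hg
  filter_upwards [eventually_ge_atTop 1] with l hl
  have hl0 : (0:ℝ) < l := by exact_mod_cast hl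
  have hkl : (k l : ℝ) = l * η := hk l
  have hklpos : (0:ℝ) < (k l : ℝ) := by rw [hkl]; positivity
  have hfactpos : (0:ℝ) < ((k l).factorial : ℝ) := by exact_mod_cast (k l).factorial_pos
  have hlog : Real.log (Real.exp (-(l:ℝ)*m) * ((l:ℝ)*m)^(k l) / ((k l).factorial : ℝ))
      = -((l:ℝ)*m) + (k l : ℝ) * Real.log ((l:ℝ)*m) - Real.log ((k l).factorial : ℝ) := by
    rw [Real.log_div (by positivity) (ne_of_gt hfactpos),
      Real.log_mul (by positivity) (by positivity), Real.log_exp, Real.log_pow]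
    ring
  have hfact : Real.log ((k l).factorial : ℝ)
      = Real.log (Stirling.stirlingSeq (k l)) + 1/2 * Real.log (2 * (k l : ℝ))
        + (k l : ℝ) * Real.log ((k l : ℝ) / Real.exp 1) := by
    have := Stirling.log_stirlingSeq_formula (k l)
    push_cast at this ⊢
    linarith
  rw [hlog, hfact, hkl]
  rw [Real.log_div (by positivity) (Real.exp_ne_zero 1), Real.log_exp,
    Real.log_mul (ne_of_gt hl0) (ne_of_gt hm), Real.log_mul (ne_of_gt hl0) (ne_of_gt hη),
    hC, Real.log_div (ne_of_gt hη) (ne_of_gt hm)]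
  field_simp
  ring

/-- Method of types: the normalized log of a product of Poisson probabilities
converges to the negative relative entropy `-∑ (η_j log(η_j/m_j) - η_j + m_j)`. -/
theorem multivariate_poisson_types_tendsto
    (n : ℕ) (η m : Fin n → ℝ)
    (hη : ∀ j, 0 < η j) (hm : ∀ j, 0 < m j)
    (k : Fin n → ℕ → ℕ) (hk : ∀ j l, (k j l : ℝ) = l * η j) :
    Tendsto
      (fun l : ℕ => (1 / (l : ℝ)) *
        Real.log (∏ j : Fin n,
          Real.exp (-(l : ℝ) * m j) * ((l : ℝ) * m j) ^ (k j l) / Nat.factorial (k j l)))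
      atTop
      (nhds (-(∑ j : Fin n, (η j * Real.log (η j / m j) - η j + m j)))) := by
  have hsum := tendsto_finset_sum (univ : Finset (Fin n))
    (fun j _ => poisson_single_tendsto (η j) (m j) (hη j) (hm j) (k j) (hk j))
  have hEq : -(∑ j : Fin n, (η j * Real.log (η j / m j) - η j + m j))
      = ∑ j : Fin n, -(η j * Real.log (η j / m j) - η j + m j) := by
    rw [Finset.sum_neg_distrib]
  rw [hEq]
  refine Tendsto.congr' ?_ hsum
  filter_upwards [eventually_ge_atTop 1] with l hl
  have hl0 : (0:ℝ) < l := by exact_mod_cast hl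
  rw [Real.log_prod]
  · rw [Finset.mul_sum]
  · intro j _
    have hfact : (0:ℝ) < (Nat.factorial (k j l) : ℝ) := by exact_mod_cast (k j l).factorial_pos
    exact ne_of_gt (div_pos (mul_pos (Real.exp_pos _)
      (pow_pos (mul_pos hl0 (hm j)) _)) hfact)
end

section
/- Let ν be a finite measure on a finite set S. The map π ↦ (1/2)[H(π‖ν) + ‖ν‖ - ‖π‖], defined on finite measures π on S (with value +∞ if π is not absolutely continuous w.r.t. ν), is lower semicontinuous with respect to pointwise (weak) convergence of finite measures. -/
open Real Finset Classical

/-- Lower semicontinuity of the conditional rate function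
`p ↦ (1/2)[H(p‖ν) + ‖ν‖ - ‖p‖]`, extended by `+∞` when `p` is not absolutely
continuous with respect to `ν`, on the set of nonnegative finite measures on a
finite set. -/
theorem conditional_rate_function_lsc
    {S : Type*} [Fintype S] (ν : S → ℝ) (hν : ∀ s, 0 ≤ ν s) :
    LowerSemicontinuousOn
      (fun p : S → ℝ =>
        if ∀ s, ν s = 0 → p s = 0 then
          ((((1 : ℝ) / 2) *
            ((∑ s, p s * Real.log (p s / ν s)) + (∑ s, ν s) - ∑ s, p s) : ℝ) : EReal)
        else (⊤ : EReal))
      {p : S → ℝ | ∀ s, 0 ≤ p s} := by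
  set R : (S → ℝ) → ℝ := fun p =>
    ((1 : ℝ) / 2) * ((∑ s, p s * Real.log (p s / ν s)) + (∑ s, ν s) - ∑ s, p s) with hRdef
  have hRcont : Continuous R := by
    apply Continuous.mul continuous_const
    apply Continuous.sub
    · apply Continuous.add
      · apply continuous_finset_sum
        intro s _
        by_cases h : ν s = 0
        · have : (fun p : S → ℝ => p s * Real.log (p s / ν s)) = fun _ => 0 := by
            funext p; simp [h]
          rw [this]; exact continuous_const
        · have : (fun p : S → ℝ => p s * Real.log (p s / ν s))
              = fun p => p s * Real.log (p s) - p s * Real.log (ν s) := by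
            funext p
            by_cases hp : p s = 0
            · simp [hp]
            · rw [Real.log_div hp h]; ring
          rw [this]
          exact (Real.continuous_mul_log.comp (continuous_apply s)).sub
            ((continuous_apply s).mul continuous_const)
      · exact continuous_const
    · exact continuous_finset_sum _ (fun s _ => continuous_apply s)
  intro x hx y hy
  by_cases hC : ∀ s, ν s = 0 → x s = 0
  · -- at `x` the function equals `R x`
    simp only [if_pos hC] at hy
    have hev : ∀ᶠ p in nhds x, y < ((R p : ℝ) : EReal) := by
      have htend : Filter.Tendsto (fun p => ((R p : ℝ) : EReal)) (nhds x)
          (nhds ((R x : ℝ) : EReal)) :=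
        (continuous_coe_real_ereal.comp hRcont).continuousAt
      exact htend.eventually_const_lt hy
    refine Filter.Eventually.filter_mono nhdsWithin_le_nhds ?_
    filter_upwards [hev] with p hp
    by_cases hCp : ∀ s, ν s = 0 → p s = 0
    · simp only [if_pos hCp]; exact hp
    · simp only [if_neg hCp]; exact lt_of_lt_of_le hp le_top
  · -- at `x` the function equals `⊤`, and stays `⊤` nearby
    simp only [if_neg hC] at hy
    push_neg at hC
    obtain ⟨s0, h0, hx0⟩ := hC
    have hev : ∀ᶠ p in nhds x, p s0 ≠ 0 :=
      (continuous_apply s0).continuousAt.eventually_ne hx0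
    refine Filter.Eventually.filter_mono nhdsWithin_le_nhds ?_
    filter_upwards [hev] with p hp
    have : ¬ ∀ s, ν s = 0 → p s = 0 := fun h => hp (h s0 h0)
    simp only [if_neg this]
    exact hy
end
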